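/- With the tensor-train projection setup (tensor A ∈ ℝ^{I₁×⋯×I_N}, orthonormal matrices Q₁,…,Q_{N−1}, the recursively defined matrices A₁,…,A_{N−1}, and the TT reconstruction B), the Frobenius-norm approximation error satisfies ‖A − B‖_F ≤ Σ_{n=1}^{N−1} ‖A_n − Q_n Q_nᵀ A_n‖_F. -/

import Mathlib

open Matrix
open scoped BigOperators

noncomputable section

/-- Frobenius norm of a real matrix. -/
def frobNorm {m n : ℕ} (A : Matrix (Fin m) (Fin n) ℝ) : ℝ :=
  Real.sqrt (∑ i, ∑ j, A i j ^ 2)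

/-- Nonincreasing rearrangement of a finite tuple of reals. -/
def sortedDesc {n : ℕ} (f : Fin n → ℝ) : Fin n → ℝ :=
  fun k => - ((fun i => - f i) ∘ Tuple.sort (fun i => - f i)) k

/-- `sval A k` is the `(k+1)`-st largest singular value of `A` (i.e. 0-based index `k`),
the square root of the `(k+1)`-st largest eigenvalue of `AᵀA`; it is `0` for `k ≥ n`
(in particular for `k ≥ min m n`). -/
def sval {m n : ℕ} (A : Matrix (Fin m) (Fin n) ℝ) (k : ℕ) : ℝ :=
  if h : k < n then
    Real.sqrt (sortedDesc (Matrix.isHermitian_iff_isSymm.mpr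
      (Matrix.IsSymm.ext (fun i j => by simp [Matrix.mul_apply, mul_comm])) :
      (Aᵀ * A).IsHermitian).eigenvalues ⟨k, h⟩)
  else 0

/-- Spectral norm (ℓ²→ℓ² operator norm) of a real matrix: its largest singular value. -/
def specNorm {m n : ℕ} (A : Matrix (Fin m) (Fin n) ℝ) : ℝ := sval A 0

/-- `tailDelta A μ = Δ_{μ+1}(A) = sqrt (Σ_{k=μ+1}^{min(m,n)} σ_k(A)²)` (with 1-based σ's,
so 0-based indices `μ, …, min m n - 1`). -/
def tailDelta {m n : ℕ} (A : Matrix (Fin m) (Fin n) ℝ) (μ : ℕ) : ℝ :=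
  Real.sqrt (∑ k ∈ Finset.Ico μ (min m n), sval A k ^ 2)

end

noncomputable section

/-- Value of a dependent tuple at a natural-number position (`0` out of range). -/
def pv {N : ℕ} {g : Fin N → ℕ} (x : (k : Fin N) → Fin (g k)) (k : ℕ) : ℕ :=
  if h : k < N then (x ⟨k, h⟩ : ℕ) else 0

/-- Mixed-radix (little-endian, MATLAB-style) linearization of the components `a, …, b-1`
(0-based) of a multi-index `x` of a tensor with dimensions `I 1, …, I N`
(the 0-based component `k` has dimension `I (k+1)`):
`ttCode I x a b = Σ_{k∈[a,b)} x_k · Π_{t∈[a,k)} I (t+1)`. -/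
def ttCode (I : ℕ → ℕ) {N : ℕ} (x : (k : Fin N) → Fin (I ((k : ℕ) + 1))) (a b : ℕ) : ℕ :=
  ∑ k ∈ Finset.Ico a b, pv x k * ∏ t ∈ Finset.Ico a k, I (t + 1)

/-- Frobenius norm of a tensor: square root of the sum of squares of all entries. -/
def tnorm {N : ℕ} {g : Fin N → ℕ} (T : ((k : Fin N) → Fin (g k)) → ℝ) : ℝ :=
  Real.sqrt (∑ x, T x ^ 2)

/-- Entry of a matrix at natural-number positions (`0` out of range). -/
def matExt {p q : ℕ} (M : Matrix (Fin p) (Fin q) ℝ) (a b : ℕ) : ℝ :=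
  if h : a < p ∧ b < q then M ⟨a, h.1⟩ ⟨b, h.2⟩ else 0

end

/-!
For `n = 0, …, N-2` let `S n` be the tensor in TT format with cores `Q₁, …, Q_n` followed by
`A_{n+1}`, and `T n` the one where `A_{n+1}` is replaced by `Q_{n+1} Q_{n+1}ᵀ A_{n+1}`, i.e. with
cores `Q₁, …, Q_{n+1}` followed by `Q_{n+1}ᵀ A_{n+1}`. Then `S 0 = A`, `T (N-2) = B`, and by the
recursion defining the `A_n`, `T n = S (n+1)`; so `A - B = Σ_n (S n - T n)` telescopes.
Each `S n - T n` is the TT tensor with cores `Q₁, …, Q_n` and `A_{n+1} - Q_{n+1} Q_{n+1}ᵀ A_{n+1}`,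
and contracting with orthonormal cores preserves the Frobenius norm, so the triangle inequality
gives the bound.
-/

open Finset

lemma sum_sq_eq_trace {m n : Type*} [Fintype m] [Fintype n] (Y : Matrix m n ℝ) :
    ∑ a, ∑ b, Y a b ^ 2 = (Yᵀ * Y).trace := by
  rw [sum_comm]
  simp [Matrix.trace, Matrix.mul_apply, sq]

lemma sum_sq_mul_of_transpose_mul_eq_one {m k n : Type*} [Fintype m] [Fintype k] [Fintype n]
    [DecidableEq k] (U : Matrix m k ℝ) (hU : Uᵀ * U = 1) (X : Matrix k n ℝ) :
    ∑ a, ∑ b, (U * X) a b ^ 2 = ∑ s, ∑ b, X s b ^ 2 := by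
  rw [sum_sq_eq_trace, sum_sq_eq_trace, Matrix.transpose_mul, Matrix.mul_assoc,
    ← Matrix.mul_assoc Uᵀ, hU, Matrix.one_mul]

lemma sum_pi_snoc {n : ℕ} (g : ℕ → ℕ) (F : ((k : Fin (n + 1)) → Fin (g k)) → ℝ) :
    ∑ j, F j = ∑ s : Fin (g n), ∑ j : (k : Fin n) → Fin (g k), F (Fin.snoc j s) := by
  rw [← (Fin.snocEquiv fun k : Fin (n + 1) => Fin (g k)).sum_comp, Fintype.sum_prod_type]
  rfl

lemma sum_range_sub_eq_of_eq_succ {G : Type*} [AddCommGroup G] (S T : ℕ → G) {m : ℕ}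
    (h : ∀ n < m, T n = S (n + 1)) : ∑ n ∈ range (m + 1), (S n - T n) = S 0 - T m := by
  induction m with
  | zero => simp
  | succ m ih =>
    rw [sum_range_succ, ih fun n hn => h n (by omega), h m (by omega)]
    abel

lemma tnorm_sum_le {N : ℕ} {g : Fin N → ℕ} {ι : Type*} (s : Finset ι)
    (f : ι → ((k : Fin N) → Fin (g k)) → ℝ) :
    tnorm (∑ i ∈ s, f i) ≤ ∑ i ∈ s, tnorm (f i) := by
  have htnorm (T : ((k : Fin N) → Fin (g k)) → ℝ) :
      tnorm T = ‖(WithLp.toLp 2 T : EuclideanSpace ℝ ((k : Fin N) → Fin (g k)))‖ := by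
    simp [tnorm, EuclideanSpace.norm_eq]
  simp_rw [htnorm, WithLp.toLp_sum]
  exact norm_sum_le _ _

abbrev TTIndex (N : ℕ) (I : ℕ → ℕ) := (k : Fin N) → Fin (I ((k : ℕ) + 1))

lemma matExt_of_lt {p q : ℕ} (M : Matrix (Fin p) (Fin q) ℝ) {a b : ℕ} (ha : a < p) (hb : b < q) :
    matExt M a b = M ⟨a, ha⟩ ⟨b, hb⟩ :=
  dif_pos ⟨ha, hb⟩

lemma matExt_sub {p q : ℕ} (M M' : Matrix (Fin p) (Fin q) ℝ) (a b : ℕ) :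
    matExt (M - M') a b = matExt M a b - matExt M' a b := by
  unfold matExt; split <;> simp

lemma pv_of_lt {N : ℕ} {g : Fin N → ℕ} (x : (k : Fin N) → Fin (g k)) {k : ℕ} (h : k < N) :
    pv x k = x ⟨k, h⟩ :=
  dif_pos h

lemma pv_lt {N : ℕ} {g : Fin N → ℕ} (x : (k : Fin N) → Fin (g k)) {k : ℕ} (h : k < N) :
    pv x k < g ⟨k, h⟩ := by
  rw [pv_of_lt x h]; exact (x ⟨k, h⟩).2

lemma pv_snoc_of_lt {N : ℕ} {g : Fin (N + 1) → ℕ} (j : (k : Fin N) → Fin (g k.castSucc))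
    (s : Fin (g (Fin.last N))) {k : ℕ} (hk : k < N) :
    pv (Fin.snoc j s : (k : Fin (N + 1)) → Fin (g k)) k = pv j k := by
  rw [pv_of_lt _ (by omega : k < N + 1), pv_of_lt _ hk]
  exact congrArg _ (Fin.snoc_castSucc _ _ ⟨k, hk⟩)

lemma pv_snoc_last {N : ℕ} {g : Fin (N + 1) → ℕ} (j : (k : Fin N) → Fin (g k.castSucc))
    (s : Fin (g (Fin.last N))) :
    pv (Fin.snoc j s : (k : Fin (N + 1)) → Fin (g k)) N = s := by
  rw [pv_of_lt _ (Nat.lt_succ_self N)]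
  exact congrArg _ (Fin.snoc_last _ _)

section MixedRadix

variable {N : ℕ} {I : ℕ → ℕ} (x : TTIndex N I)

lemma ttCode_self (a : ℕ) : ttCode I x a a = 0 := by
  simp [ttCode]

lemma ttCode_eq_add_mul {a b : ℕ} (hab : a < b) :
    ttCode I x a b = pv x a + I (a + 1) * ttCode I x (a + 1) b := by
  unfold ttCode
  rw [sum_eq_sum_Ico_succ_bot hab, mul_sum, Ico_self, prod_empty, mul_one]
  refine congrArg _ (sum_congr rfl fun k hk => ?_)
  rw [prod_eq_prod_Ico_succ_bot (by grind), mul_left_comm]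

lemma ttCode_lt {b : ℕ} (hb : b ≤ N) (a : ℕ) : ttCode I x a b < ∏ t ∈ Ico a b, I (t + 1) := by
  induction hd : b - a generalizing a with
  | zero => simp [ttCode, Ico_eq_empty_of_le (by omega : b ≤ a)]
  | succ d ih =>
    have hab : a < b := by omega
    rw [ttCode_eq_add_mul x hab, prod_eq_prod_Ico_succ_bot hab]
    exact Nat.add_mul_lt_mul_of_lt_of_lt (pv_lt x (by omega)) (ih (a + 1) (by omega))

lemma ttCode_mod {a b : ℕ} (hab : a < b) (hb : b ≤ N) : ttCode I x a b % I (a + 1) = pv x a := by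
  rw [ttCode_eq_add_mul x hab, Nat.add_mul_mod_self_left, Nat.mod_eq_of_lt (pv_lt x (by omega))]

lemma ttCode_div {a b : ℕ} (hab : a < b) (hb : b ≤ N) :
    ttCode I x a b / I (a + 1) = ttCode I x (a + 1) b := by
  have hx : pv x a < I (a + 1) := pv_lt x (by omega)
  rw [ttCode_eq_add_mul x hab, Nat.add_mul_div_left _ _ (by omega), Nat.div_eq_of_lt hx, zero_add]

lemma eq_of_pv_zero_eq_of_ttCode_eq {y : TTIndex N I} (h0 : pv x 0 = pv y 0)
    (h : ttCode I x 1 N = ttCode I y 1 N) : x = y := by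
  have hcode : ∀ k, 1 ≤ k → k ≤ N → ttCode I x k N = ttCode I y k N := by
    intro k hk hkN
    induction k, hk using Nat.le_induction with
    | base => exact h
    | succ k _ ih =>
      rw [← ttCode_div x (by omega) le_rfl, ← ttCode_div y (by omega) le_rfl, ih (by omega)]
  funext k
  apply Fin.ext
  rw [← pv_of_lt x k.2, ← pv_of_lt y k.2]
  rcases Nat.eq_zero_or_pos k with hk | hk
  · rw [hk, h0]
  · rw [← ttCode_mod x k.2 le_rfl, ← ttCode_mod y k.2 le_rfl, hcode k hk k.2.le]

end MixedRadix

section RowReshape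

variable {R J C C' : ℕ}

def rowSplitEquiv (R J C : ℕ) : Fin R × Fin (J * C) ≃ Fin (R * J) × Fin C where
  toFun p :=
    have hJ : 0 < J := Nat.pos_of_mul_pos_right (Fin.pos p.2)
    (⟨p.1 + R * (p.2 % J), Nat.add_mul_lt_mul_of_lt_of_lt p.1.2 (Nat.mod_lt _ hJ)⟩,
      ⟨p.2 / J, Nat.div_lt_of_lt_mul p.2.2⟩)
  invFun q :=
    have hR : 0 < R := Nat.pos_of_mul_pos_right (Fin.pos q.1)
    (⟨q.1 % R, Nat.mod_lt _ hR⟩,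
      ⟨q.1 / R + J * q.2, Nat.add_mul_lt_mul_of_lt_of_lt (Nat.div_lt_of_lt_mul q.1.2) q.2.2⟩)
  left_inv := by
    rintro ⟨s, b⟩
    have hR : 0 < R := Fin.pos s
    ext <;> simp [Nat.add_mul_mod_self_left, Nat.mod_eq_of_lt s.2, Nat.add_mul_div_left _ _ hR,
      Nat.div_eq_of_lt s.2, Nat.mod_add_div]
  right_inv := by
    rintro ⟨a, c⟩
    have hJ : 0 < J := Nat.pos_of_mul_pos_left (Fin.pos a)
    have ha : (a : ℕ) / R < J := Nat.div_lt_of_lt_mul a.2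
    ext <;> simp [Nat.add_mul_mod_self_left, Nat.mod_eq_of_lt ha, Nat.add_mul_div_left _ _ hJ,
      Nat.div_eq_of_lt ha, Nat.mod_add_div]

def splitRowIndex (M : Matrix (Fin (R * J)) (Fin C) ℝ) : Matrix (Fin R) (Fin C') ℝ :=
  fun s b => matExt M (s + R * (b % J)) (b / J)

/-- The reshaping `ℝ^{R × (J C')} → ℝ^{R J × C'}` of the recursion defining `A_n`: the row index
absorbs the leading factor `J` of the column index, `(s, i + J c) ↦ (s + R i, c)`. -/
def mergeRowIndex (P : Matrix (Fin R) (Fin C) ℝ) : Matrix (Fin (R * J)) (Fin C') ℝ :=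
  fun a c => matExt P (a % R) (a / R + J * c)

lemma splitRowIndex_sub (M M' : Matrix (Fin (R * J)) (Fin C) ℝ) :
    (splitRowIndex (M - M') : Matrix (Fin R) (Fin C') ℝ) = splitRowIndex M - splitRowIndex M' := by
  ext s b
  simp [splitRowIndex, matExt_sub]

lemma splitRowIndex_apply (hC : C' = J * C) (M : Matrix (Fin (R * J)) (Fin C) ℝ) (s : Fin R)
    (b : Fin C') :
    (splitRowIndex M : Matrix (Fin R) (Fin C') ℝ) s b =
      M (rowSplitEquiv R J C (s, finCongr hC b)).1 (rowSplitEquiv R J C (s, finCongr hC b)).2 :=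
  matExt_of_lt _ _ _

lemma sum_sq_splitRowIndex (hC : C' = J * C) (M : Matrix (Fin (R * J)) (Fin C) ℝ) :
    ∑ s, ∑ b, (splitRowIndex M : Matrix (Fin R) (Fin C') ℝ) s b ^ 2 = ∑ a, ∑ c, M a c ^ 2 := by
  simp_rw [splitRowIndex_apply hC]
  rw [← Fintype.sum_prod_type', ← Fintype.sum_prod_type']
  exact Fintype.sum_equiv (((Equiv.refl _).prodCongr (finCongr hC)).trans (rowSplitEquiv R J C))
    _ _ fun _ => rfl

lemma matExt_mergeRowIndex (P : Matrix (Fin R) (Fin C) ℝ) {s i c : ℕ} (hs : s < R) (hi : i < J)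
    (hc : c < C') :
    matExt (mergeRowIndex P : Matrix (Fin (R * J)) (Fin C') ℝ) (s + R * i) c =
      matExt P s (i + J * c) := by
  rw [matExt_of_lt _ (Nat.add_mul_lt_mul_of_lt_of_lt hs hi) hc]
  simp [mergeRowIndex, Nat.add_mul_mod_self_left, Nat.mod_eq_of_lt hs,
    Nat.add_mul_div_left _ _ (by omega : 0 < R), Nat.div_eq_of_lt hs]

lemma splitRowIndex_mergeRowIndex (hC : C = J * C') (P : Matrix (Fin R) (Fin C) ℝ) :
    splitRowIndex (mergeRowIndex P : Matrix (Fin (R * J)) (Fin C') ℝ) = P := by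
  ext s b
  have hJ : 0 < J := Nat.pos_of_mul_pos_right (hC ▸ Fin.pos b)
  have hb : (b : ℕ) / J < C' := Nat.div_lt_of_lt_mul (hC ▸ b.2)
  rw [splitRowIndex, matExt_mergeRowIndex P s.2 (Nat.mod_lt _ hJ) hb, Nat.mod_add_div,
    matExt_of_lt P s.2 b.2]

lemma eq_mergeRowIndex_of_forall (hC : C = J * C') (M : Matrix (Fin (R * J)) (Fin C') ℝ)
    (P : Matrix (Fin R) (Fin C) ℝ)
    (h : ∀ (s : Fin R) (i : Fin J) (c : Fin C') (a : Fin (R * J)) (b : Fin C),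
      (a : ℕ) = s + R * i → (b : ℕ) = i + J * c → M a c = P s b) :
    M = mergeRowIndex P := by
  ext a c
  have hR : 0 < R := Nat.pos_of_mul_pos_right (Fin.pos a)
  have hi : (a : ℕ) / R < J := Nat.div_lt_of_lt_mul a.2
  have hb : (a : ℕ) / R + J * c < C := hC ▸ Nat.add_mul_lt_mul_of_lt_of_lt hi c.2
  rw [h ⟨_, Nat.mod_lt _ hR⟩ ⟨_, hi⟩ c a ⟨_, hb⟩ (Nat.mod_add_div _ _).symm rfl, mergeRowIndex,
    matExt_of_lt P (Nat.mod_lt _ hR) hb]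

end RowReshape

/-- The row index `j_k + μ_k i_{k+1}` of the core `Q (k + 1)`, with `j_0 = 0` (0-based `k`). -/
def ttRow {N : ℕ} {I : ℕ → ℕ} (r : ℕ → ℕ) (x : TTIndex N I) {n : ℕ}
    (j : (k : Fin n) → Fin (r (k + 1))) (k : ℕ) : ℕ :=
  (if k = 0 then 0 else pv j (k - 1)) + r k * pv x k

section TTExpand

variable {N : ℕ} {I r : ℕ → ℕ} (Q : (n : ℕ) → Matrix (Fin (r (n - 1) * I n)) (Fin (r n)) ℝ)

def ttExpandStep (n : ℕ)
    (M : Matrix (Fin (r (n + 1) * I (n + 2))) (Fin (∏ t ∈ Ico (n + 2) N, I (t + 1))) ℝ) :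
    Matrix (Fin (r n * I (n + 1))) (Fin (∏ t ∈ Ico (n + 1) N, I (t + 1))) ℝ :=
  Q (n + 1) * splitRowIndex M

/-- The tensor in TT format with cores `Q 1, …, Q n` followed by `M`, whose rows are indexed by
(rank `n`, mode `n + 1`) and whose columns linearize the modes `n + 2, …, N`. -/
def ttExpand : (n : ℕ) →
    Matrix (Fin (r n * I (n + 1))) (Fin (∏ t ∈ Ico (n + 1) N, I (t + 1))) ℝ → TTIndex N I → ℝ
  | 0, M, x => matExt M (pv x 0) (ttCode I x 1 N)
  | n + 1, M, x => ttExpand n (ttExpandStep Q n M) x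

lemma ttExpand_sub (n : ℕ)
    (M M' : Matrix (Fin (r n * I (n + 1))) (Fin (∏ t ∈ Ico (n + 1) N, I (t + 1))) ℝ) :
    ttExpand Q n (M - M') = ttExpand Q n M - ttExpand Q n M' := by
  induction n with
  | zero => funext x; simp [ttExpand, matExt_sub]
  | succ n ih =>
    funext x
    simp only [ttExpand, ttExpandStep, splitRowIndex_sub, Matrix.mul_sub, ih, Pi.sub_apply]

lemma ttExpandStep_mergeRowIndex {n : ℕ} (hn : n + 1 < N)
    (P : Matrix (Fin (r (n + 1))) (Fin (∏ t ∈ Ico (n + 1) N, I (t + 1))) ℝ) :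
    ttExpandStep Q n (mergeRowIndex P) = Q (n + 1) * P := by
  rw [ttExpandStep, splitRowIndex_mergeRowIndex (prod_eq_prod_Ico_succ_bot hn _)]

lemma sum_sq_ttExpandStep {n : ℕ} (hQ : (Q (n + 1))ᵀ * Q (n + 1) = 1) (hn : n + 1 < N)
    (M : Matrix (Fin (r (n + 1) * I (n + 2))) (Fin (∏ t ∈ Ico (n + 2) N, I (t + 1))) ℝ) :
    ∑ a, ∑ b, ttExpandStep Q n M a b ^ 2 = ∑ a, ∑ b, M a b ^ 2 := by
  have hsplit := sum_sq_splitRowIndex (R := r (n + 1))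
    (prod_eq_prod_Ico_succ_bot hn fun t => I (t + 1)) M
  exact (sum_sq_mul_of_transpose_mul_eq_one (Q (n + 1)) hQ _).trans hsplit

lemma sum_sq_ttExpand_zero (hr0 : r 0 = 1) (hN : 0 < N)
    (M : Matrix (Fin (r 0 * I 1)) (Fin (∏ t ∈ Ico 1 N, I (t + 1))) ℝ) :
    ∑ x, ttExpand Q 0 M x ^ 2 = ∑ a, ∑ b, M a b ^ 2 := by
  have hrow (x : TTIndex N I) : pv x 0 < r 0 * I 1 := by rw [hr0, one_mul]; exact pv_lt x hN
  let φ (x : TTIndex N I) : Fin (r 0 * I 1) × Fin (∏ t ∈ Ico 1 N, I (t + 1)) :=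
    (⟨pv x 0, hrow x⟩, ⟨ttCode I x 1 N, ttCode_lt x le_rfl 1⟩)
  have hφ : Function.Bijective φ := by
    refine (Fintype.bijective_iff_injective_and_card φ).2 ⟨fun x y hxy => ?_, ?_⟩
    · simp only [φ, Prod.mk.injEq, Fin.mk.injEq] at hxy
      exact eq_of_pv_zero_eq_of_ttCode_eq x hxy.1 hxy.2
    · simp only [Fintype.card_prod, Fintype.card_pi, Fintype.card_fin, hr0, one_mul]
      rw [Fin.prod_univ_eq_prod_range (fun k => I (k + 1)), range_eq_Ico,
        prod_eq_prod_Ico_succ_bot hN]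
  rw [← Fintype.sum_prod_type']
  exact Fintype.sum_bijective φ hφ _ _ fun x => by
    simp only [ttExpand, φ, matExt_of_lt M (hrow x) (ttCode_lt x le_rfl 1)]

lemma sum_sq_ttExpand (hr0 : r 0 = 1) {n : ℕ} (hQ : ∀ k, 1 ≤ k → k ≤ n → (Q k)ᵀ * Q k = 1)
    (hn : n + 1 ≤ N)
    (M : Matrix (Fin (r n * I (n + 1))) (Fin (∏ t ∈ Ico (n + 1) N, I (t + 1))) ℝ) :
    ∑ x, ttExpand Q n M x ^ 2 = ∑ a, ∑ b, M a b ^ 2 := by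
  induction n with
  | zero => exact sum_sq_ttExpand_zero Q hr0 hn M
  | succ n ih =>
    rw [← sum_sq_ttExpandStep Q (hQ (n + 1) (by omega) le_rfl) hn M]
    exact ih (fun k hk hkn => hQ k hk (by omega)) (by omega) _

lemma tnorm_ttExpand (hr0 : r 0 = 1) {n : ℕ} (hQ : ∀ k, 1 ≤ k → k ≤ n → (Q k)ᵀ * Q k = 1)
    (hn : n + 1 ≤ N)
    (M : Matrix (Fin (r n * I (n + 1))) (Fin (∏ t ∈ Ico (n + 1) N, I (t + 1))) ℝ) :
    tnorm (ttExpand Q n M) = frobNorm M :=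
  congrArg Real.sqrt (sum_sq_ttExpand Q hr0 hQ hn M)

variable (x : TTIndex N I)

def ttCoreProd {n : ℕ} (j : (k : Fin n) → Fin (r (k + 1))) : ℝ :=
  ∏ k ∈ range n, matExt (Q (k + 1)) (ttRow r x j k) (pv j k)

variable {n : ℕ} (j : (k : Fin n) → Fin (r (k + 1))) (s : Fin (r (n + 1)))

lemma ttRow_snoc_of_le {k : ℕ} (hk : k ≤ n) :
    ttRow r x (Fin.snoc j s : (k : Fin (n + 1)) → Fin (r (k + 1))) k = ttRow r x j k := by
  unfold ttRow
  split_ifs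
  · rfl
  · rw [pv_snoc_of_lt (g := fun k : Fin (n + 1) => r (k + 1)) j s (by omega)]

lemma ttRow_snoc_succ :
    ttRow r x (Fin.snoc j s : (k : Fin (n + 1)) → Fin (r (k + 1))) (n + 1) =
      s + r (n + 1) * pv x (n + 1) := by
  rw [ttRow, if_neg n.succ_ne_zero, Nat.add_sub_cancel,
    pv_snoc_last (g := fun k : Fin (n + 1) => r (k + 1))]

lemma ttRow_lt (hr0 : r 0 = 1) (hn : n < N) : ttRow r x j n < r n * I (n + 1) := by
  have hx : pv x n < I (n + 1) := pv_lt x hn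
  rcases n with _ | n
  · simpa [ttRow, hr0] using hx
  · rw [ttRow, if_neg n.succ_ne_zero, Nat.add_sub_cancel]
    exact Nat.add_mul_lt_mul_of_lt_of_lt (pv_lt j n.lt_succ_self) hx

lemma ttCoreProd_snoc :
    ttCoreProd Q x (Fin.snoc j s : (k : Fin (n + 1)) → Fin (r (k + 1))) =
      ttCoreProd Q x j * matExt (Q (n + 1)) (ttRow r x j n) s := by
  rw [ttCoreProd, prod_range_succ, ttRow_snoc_of_le x j s le_rfl,
    pv_snoc_last (g := fun k : Fin (n + 1) => r (k + 1))]
  congr 1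
  refine prod_congr rfl fun k hk => ?_
  rw [mem_range] at hk
  rw [ttRow_snoc_of_le x j s hk.le, pv_snoc_of_lt (g := fun k : Fin (n + 1) => r (k + 1)) j s hk]

lemma matExt_ttExpandStep (hn : n + 1 < N) {a : ℕ} (ha : a < r n * I (n + 1))
    (M : Matrix (Fin (r (n + 1) * I (n + 2))) (Fin (∏ t ∈ Ico (n + 2) N, I (t + 1))) ℝ) :
    matExt (ttExpandStep Q n M) a (ttCode I x (n + 1) N) =
      ∑ s : Fin (r (n + 1)), matExt (Q (n + 1)) a s *
        matExt M (s + r (n + 1) * pv x (n + 1)) (ttCode I x (n + 2) N) := by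
  rw [matExt_of_lt _ ha (ttCode_lt x le_rfl _), ttExpandStep, Matrix.mul_apply]
  refine sum_congr rfl fun s _ => ?_
  rw [matExt_of_lt (Q (n + 1)) ha s.2]
  simp only [splitRowIndex, ttCode_mod x hn le_rfl, ttCode_div x hn le_rfl]

lemma ttExpand_eq_sum (hr0 : r 0 = 1) (hn : n + 1 ≤ N)
    (M : Matrix (Fin (r n * I (n + 1))) (Fin (∏ t ∈ Ico (n + 1) N, I (t + 1))) ℝ) :
    ttExpand Q n M x = ∑ j : (k : Fin n) → Fin (r (k + 1)),
      ttCoreProd Q x j * matExt M (ttRow r x j n) (ttCode I x (n + 1) N) := by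
  induction n with
  | zero => simp [ttExpand, ttCoreProd, ttRow, hr0]
  | succ n ih =>
    rw [ttExpand, ih (by omega), sum_pi_snoc (fun k => r (k + 1)), sum_comm]
    refine sum_congr rfl fun j _ => ?_
    rw [matExt_ttExpandStep Q x hn (ttRow_lt x j hr0 (by omega)), mul_sum]
    refine sum_congr rfl fun s _ => ?_
    rw [ttCoreProd_snoc, ttRow_snoc_succ, mul_assoc]

lemma ttExpand_zero_eq (hr0 : r 0 = 1) (hN : 0 < N)
    (M : Matrix (Fin (r 0 * I 1)) (Fin (∏ t ∈ Ico 1 N, I (t + 1))) ℝ) (T : TTIndex N I → ℝ)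
    (h : ∀ (x : TTIndex N I) (a : Fin (r 0 * I 1)) (b : Fin (∏ t ∈ Ico 1 N, I (t + 1))),
      (a : ℕ) = pv x 0 → (b : ℕ) = ttCode I x 1 N → M a b = T x) :
    ttExpand Q 0 M = T := by
  funext x
  have ha : pv x 0 < r 0 * I 1 := by rw [hr0, one_mul]; exact pv_lt x hN
  rw [ttExpand, matExt_of_lt M ha (ttCode_lt x le_rfl 1)]
  exact h x _ _ rfl rfl

lemma ttExpand_mergeRowIndex_eq_sum (hr0 : r 0 = 1) {m C : ℕ}
    (P : Matrix (Fin (r (m + 1))) (Fin C) ℝ)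
    (x : TTIndex (m + 2) I) :
    ttExpand Q (m + 1)
        (mergeRowIndex P : Matrix (Fin (r (m + 1) * I (m + 2)))
          (Fin (∏ t ∈ Ico (m + 2) (m + 2), I (t + 1))) ℝ) x =
      ∑ j : (k : Fin (m + 1)) → Fin (r (k + 1)),
        ttCoreProd Q x j * matExt P (pv j m) (pv x (m + 1)) := by
  rw [ttExpand_eq_sum Q x hr0 le_rfl]
  refine sum_congr rfl fun j _ => ?_
  rw [ttRow, if_neg m.succ_ne_zero, Nat.add_sub_cancel, ttCode_self,
    matExt_mergeRowIndex P (pv_lt j m.lt_succ_self) (pv_lt x (m + 1).lt_succ_self) (by simp),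
    mul_zero, add_zero]

end TTExpand

theorem tt_error_le_sum_general
    (N : ℕ) (hN : 2 ≤ N)
    -- dimensions `I 1, …, I N` and TT-ranks `r 0 = μ₀ = 1, r 1 = μ₁, …, r N = μ_N = 1`
    (I r : ℕ → ℕ) (hr0 : r 0 = 1)
    -- the tensor `A ∈ ℝ^{I₁ × ⋯ × I_N}` (0-based component `k` is the paper index `i_{k+1}`)
    (A : ((k : Fin N) → Fin (I ((k : ℕ) + 1))) → ℝ)
    -- the orthonormal matrices `Q n ∈ ℝ^{μ_{n-1} I_n × μ_n}` for `n = 1, …, N-1`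
    (Q : (n : ℕ) → Matrix (Fin (r (n - 1) * I n)) (Fin (r n)) ℝ)
    (hQ : ∀ n, 1 ≤ n → n ≤ N - 1 → (Q n)ᵀ * Q n = 1)
    -- the matrices `A_n ∈ ℝ^{μ_{n-1} I_n × (I_{n+1} ⋯ I_N)}` for `n = 1, …, N-1`
    (Amat : (n : ℕ) →
      Matrix (Fin (r (n - 1) * I n)) (Fin (∏ t ∈ Finset.Ico n N, I (t + 1))) ℝ)
    -- `A₁` is the first unfolding `A_{([1])}` of `A`
    (hA1 : ∀ (x : (k : Fin N) → Fin (I ((k : ℕ) + 1))) (a : Fin (r 0 * I 1))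
      (b : Fin (∏ t ∈ Finset.Ico 1 N, I (t + 1))),
      (a : ℕ) = pv x 0 → (b : ℕ) = ttCode I x 1 N → Amat 1 a b = A x)
    -- for `n = 2, …, N-1`, `A_n` is the reshaping of `Q_{n-1}ᵀ A_{n-1}` merging the row
    -- index with the `I_n` index:  `A_n(s + μ_{n-1} i, j) = (Q_{n-1}ᵀ A_{n-1})(s, i + I_n j)`
    (hrec : ∀ n, 2 ≤ n → n ≤ N - 1 →
      ∀ (s : Fin (r (n - 1))) (i : Fin (I n)) (j : Fin (∏ t ∈ Finset.Ico n N, I (t + 1)))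
        (a : Fin (r (n - 1) * I n)) (b : Fin (∏ t ∈ Finset.Ico (n - 1) N, I (t + 1))),
        (a : ℕ) = (s : ℕ) + r (n - 1) * (i : ℕ) →
        (b : ℕ) = (i : ℕ) + I n * (j : ℕ) →
        Amat n a j = ((Q (n - 1))ᵀ * Amat (n - 1)) s b)
    -- the TT reconstruction `B`, with entries
    -- `B(i₁,…,i_N) = Σ_{j₁,…,j_{N-1}} Q₁(i₁,j₁) Q₂(j₁+μ₁ i₂, j₂) ⋯
    --      Q_{N-1}(j_{N-2}+μ_{N-2} i_{N-1}, j_{N-1}) · (Q_{N-1}ᵀ A_{N-1})(j_{N-1}, i_N)`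
    (B : ((k : Fin N) → Fin (I ((k : ℕ) + 1))) → ℝ)
    (hB : ∀ x, B x =
      ∑ j : (nn : Fin (N - 1)) → Fin (r ((nn : ℕ) + 1)),
        (∏ nn ∈ Finset.range (N - 1),
          matExt (Q (nn + 1)) ((if nn = 0 then 0 else pv j (nn - 1)) + r nn * pv x nn)
            (pv j nn)) *
          matExt ((Q (N - 1))ᵀ * Amat (N - 1)) (pv j (N - 2)) (pv x (N - 1)))
    :
    tnorm (fun x => A x - B x) ≤
      ∑ n ∈ Finset.Icc 1 (N - 1), frobNorm (Amat n - Q n * (Q n)ᵀ * Amat n) := by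
  obtain ⟨m, rfl⟩ : ∃ m, N = m + 2 := ⟨N - 2, by omega⟩
  set S : ℕ → TTIndex (m + 2) I → ℝ := fun n => ttExpand Q n (Amat (n + 1))
  set T : ℕ → TTIndex (m + 2) I → ℝ :=
    fun n => ttExpand Q (n + 1) (mergeRowIndex ((Q (n + 1))ᵀ * Amat (n + 1)))
  have hS0 : S 0 = A := ttExpand_zero_eq Q hr0 (by omega) _ A hA1
  have hTm : T m = B :=
    funext fun x => ((hB x).trans (ttExpand_mergeRowIndex_eq_sum Q hr0 _ x).symm).symm
  have hTS : ∀ n < m, T n = S (n + 1) := fun n hn => by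
    simp only [T, S]
    rw [eq_mergeRowIndex_of_forall (prod_eq_prod_Ico_succ_bot (by omega) fun t => I (t + 1)) _ _
      (hrec (n + 2) (by omega) (by omega))]
    rfl
  have hST : ∀ n ≤ m, S n - T n =
      ttExpand Q n (Amat (n + 1) - Q (n + 1) * (Q (n + 1))ᵀ * Amat (n + 1)) := fun n hn => by
    rw [ttExpand_sub, Matrix.mul_assoc, ← ttExpandStep_mergeRowIndex Q (by omega)]
    rfl
  calc tnorm (fun x => A x - B x) = tnorm (∑ n ∈ range (m + 1), (S n - T n)) := by
        rw [sum_range_sub_eq_of_eq_succ S T hTS, hS0, hTm]; rfl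
    _ ≤ ∑ n ∈ range (m + 1), tnorm (S n - T n) := tnorm_sum_le _ _
    _ = ∑ n ∈ range (m + 1),
          frobNorm (Amat (n + 1) - Q (n + 1) * (Q (n + 1))ᵀ * Amat (n + 1)) := by
      refine sum_congr rfl fun n hn => ?_
      rw [mem_range] at hn
      rw [hST n (by omega), tnorm_ttExpand Q hr0 (fun k hk hkn => hQ k hk (by omega)) (by omega)]
    _ = ∑ n ∈ Icc 1 (m + 2 - 1), frobNorm (Amat n - Q n * (Q n)ᵀ * Amat n) := by
      rw [range_eq_Ico, sum_Ico_add' (fun n => frobNorm (Amat n - Q n * (Q n)ᵀ * Amat n)),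
        ← Ico_add_one_right_eq_Icc]
      rfl

/-- TT projection error bound:
`‖A − B‖_F ≤ Σ_{n=1}^{N−1} ‖A_n − Q_n Q_nᵀ A_n‖_F`. -/
theorem tt_error_le_sum
    (N : ℕ) (hN : 2 ≤ N)
    -- dimensions `I 1, …, I N` and TT-ranks `r 0 = μ₀ = 1, r 1 = μ₁, …, r N = μ_N = 1`
    (I r : ℕ → ℕ) (hr0 : r 0 = 1) (hrN : r N = 1) (hrpos : ∀ n ≤ N, 0 < r n)
    -- the tensor `A ∈ ℝ^{I₁ × ⋯ × I_N}` (0-based component `k` is the paper index `i_{k+1}`)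
    (A : ((k : Fin N) → Fin (I ((k : ℕ) + 1))) → ℝ)
    -- the orthonormal matrices `Q n ∈ ℝ^{μ_{n-1} I_n × μ_n}` for `n = 1, …, N-1`
    (Q : (n : ℕ) → Matrix (Fin (r (n - 1) * I n)) (Fin (r n)) ℝ)
    (hQ : ∀ n, 1 ≤ n → n ≤ N - 1 → (Q n)ᵀ * Q n = 1)
    -- the matrices `A_n ∈ ℝ^{μ_{n-1} I_n × (I_{n+1} ⋯ I_N)}` for `n = 1, …, N-1`
    (Amat : (n : ℕ) →
      Matrix (Fin (r (n - 1) * I n)) (Fin (∏ t ∈ Finset.Ico n N, I (t + 1))) ℝ)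
    -- `A₁` is the first unfolding `A_{([1])}` of `A`
    (hA1 : ∀ (x : (k : Fin N) → Fin (I ((k : ℕ) + 1))) (a : Fin (r 0 * I 1))
      (b : Fin (∏ t ∈ Finset.Ico 1 N, I (t + 1))),
      (a : ℕ) = pv x 0 → (b : ℕ) = ttCode I x 1 N → Amat 1 a b = A x)
    -- for `n = 2, …, N-1`, `A_n` is the reshaping of `Q_{n-1}ᵀ A_{n-1}` merging the row
    -- index with the `I_n` index:  `A_n(s + μ_{n-1} i, j) = (Q_{n-1}ᵀ A_{n-1})(s, i + I_n j)`
    (hrec : ∀ n, 2 ≤ n → n ≤ N - 1 →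
      ∀ (s : Fin (r (n - 1))) (i : Fin (I n)) (j : Fin (∏ t ∈ Finset.Ico n N, I (t + 1)))
        (a : Fin (r (n - 1) * I n)) (b : Fin (∏ t ∈ Finset.Ico (n - 1) N, I (t + 1))),
        (a : ℕ) = (s : ℕ) + r (n - 1) * (i : ℕ) →
        (b : ℕ) = (i : ℕ) + I n * (j : ℕ) →
        Amat n a j = ((Q (n - 1))ᵀ * Amat (n - 1)) s b)
    -- the TT reconstruction `B`, with entries
    -- `B(i₁,…,i_N) = Σ_{j₁,…,j_{N-1}} Q₁(i₁,j₁) Q₂(j₁+μ₁ i₂, j₂) ⋯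
    --      Q_{N-1}(j_{N-2}+μ_{N-2} i_{N-1}, j_{N-1}) · (Q_{N-1}ᵀ A_{N-1})(j_{N-1}, i_N)`
    (B : ((k : Fin N) → Fin (I ((k : ℕ) + 1))) → ℝ)
    (hB : ∀ x, B x =
      ∑ j : (nn : Fin (N - 1)) → Fin (r ((nn : ℕ) + 1)),
        (∏ nn ∈ Finset.range (N - 1),
          matExt (Q (nn + 1)) ((if nn = 0 then 0 else pv j (nn - 1)) + r nn * pv x nn)
            (pv j nn)) *
          matExt ((Q (N - 1))ᵀ * Amat (N - 1)) (pv j (N - 2)) (pv x (N - 1)))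
    :
    tnorm (fun x => A x - B x) ≤
      ∑ n ∈ Finset.Icc 1 (N - 1), frobNorm (Amat n - Q n * (Q n)ᵀ * Amat n) :=
  tt_error_le_sum_general N hN I r hr0 A Q hQ Amat hA1 hrec B hB
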